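/- arXiv:0807.4745 — 2 statements merged into one kernel-verified Lean document; each statement's English description precedes it below -/
import Mathlib

section
/- Let A be a nonempty topological space, let m ≥ 2, let D be the closed unit ball in ℝ^{m−1} with boundary sphere S = ∂D, and let CA = (A × [0,1]) / (A × {0}) be the cone on A with cone point p, where A is identified with A × {1} ⊆ CA. Let x be a point of the interior of D. Then the space (CA × D) \ {(p, x)} deformation retracts onto the subspace (CA × S) ∪ (A × D); in particular the two spaces are homotopy equivalent. -/
/-- The setoid on `A × [0,1]` defining the cone: collapse `A × {0}` to a point. -/
def coneSetoid (A : Type) [TopologicalSpace A] : Setoid (A × unitInterval) where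
  r a b := a = b ∨ (a.2 = 0 ∧ b.2 = 0)
  iseqv := by
    refine ⟨fun a => Or.inl rfl, ?_, ?_⟩
    · rintro a b (rfl | ⟨h1, h2⟩)
      · exact Or.inl rfl
      · exact Or.inr ⟨h2, h1⟩
    · rintro a b c (rfl | ⟨h1, h2⟩) (rfl | ⟨h3, h4⟩)
      · exact Or.inl rfl
      · exact Or.inr ⟨h3, h4⟩
      · exact Or.inr ⟨h1, h2⟩
      · exact Or.inr ⟨h1, h4⟩

/-- The cone `CA = (A × [0,1]) / (A × {0})`, with the quotient topology. -/
def Cone (A : Type) [TopologicalSpace A] : Type := Quotient (coneSetoid A)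

instance (A : Type) [TopologicalSpace A] : TopologicalSpace (Cone A) :=
  instTopologicalSpaceQuotient

/-- The cone point `p` of `CA` (the image of `A × {0}`). -/
noncomputable def conePoint (A : Type) [TopologicalSpace A] [Nonempty A] : Cone A :=
  Quotient.mk (coneSetoid A) (Classical.arbitrary A, 0)

/-- The base `A ⊆ CA`, i.e. the image of `A × {1}` in the cone. -/
def coneBase (A : Type) [TopologicalSpace A] : Set (Cone A) :=
  {c | ∃ a : A, c = Quotient.mk (coneSetoid A) (a, 1)}

/-- `Z ⊆ Y` is a deformation retract of `Y`: there is a homotopy from the identity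
map of `Y` to a retraction of `Y` onto `Z`. -/
def IsDeformationRetract (Y : Type) [TopologicalSpace Y] (Z : Set Y) : Prop :=
  ∃ H : C(Y × unitInterval, Y),
    (∀ y : Y, H (y, 0) = y) ∧ (∀ y : Y, H (y, 1) ∈ Z) ∧ (∀ z ∈ Z, H (z, 1) = z)

/-- The closed unit ball `D` in `ℝ^d`. -/
def unitBall (d : ℕ) : Set (EuclideanSpace ℝ (Fin d)) := Metric.closedBall 0 1

/-- The subspace `(CA × S) ∪ (A × D)` of `CA × D`, where `S = ∂D`. -/
def coneSphereUnion (A : Type) [TopologicalSpace A] (d : ℕ) :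
    Set (Cone A × ↥(unitBall d)) :=
  {w | (w.2 : EuclideanSpace ℝ (Fin d)) ∈ Metric.sphere (0 : EuclideanSpace ℝ (Fin d)) 1
        ∨ w.1 ∈ coneBase A}

/-
Give `CA × D` the coordinates `(height, y)`. Seen from the removed point `(p, x)` the product is
star-shaped: with `g` the gauge of the ball `D` centred at `x`,
the function `ν (c, y) = max (height c) (g y)` is continuous, vanishes only at `(p, x)`, and
equals `1` exactly on `(CA × S) ∪ (A × D)`. Pushing every point radially away from `(p, x)` by a
factor moving from `1` to `1 / ν` (multiplying the height and moving `y` along the ray from `x`)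
deforms the punctured space onto that level set.
-/

open Set Metric Topology

namespace Cone

variable {A : Type} [TopologicalSpace A]

noncomputable def height : Cone A → ℝ :=
  Quotient.lift (fun p : A × unitInterval => (p.2 : ℝ)) <| by
    rintro p q (rfl | ⟨hp, hq⟩)
    · rfl
    · simp [hp, hq]

@[simp]
lemma height_mk (a : A) (t : unitInterval) :
    height (Quotient.mk (coneSetoid A) (a, t)) = t := rfl

lemma continuous_height : Continuous (height : Cone A → ℝ) :=
  Continuous.quotient_lift (by fun_prop) _

lemma height_nonneg (c : Cone A) : 0 ≤ height c := by
  induction c using Quotient.ind with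
  | _ p => exact p.2.2.1

lemma height_le_one (c : Cone A) : height c ≤ 1 := by
  induction c using Quotient.ind with
  | _ p => exact p.2.2.2

lemma height_eq_zero_iff [Nonempty A] {c : Cone A} : height c = 0 ↔ c = conePoint A := by
  refine ⟨fun h => ?_, fun h => h ▸ rfl⟩
  induction c using Quotient.ind with
  | _ p => exact Quotient.sound (Or.inr ⟨Subtype.ext h, rfl⟩)

lemma height_eq_one_of_mem_coneBase {c : Cone A} (hc : c ∈ coneBase A) : height c = 1 := by
  obtain ⟨a, rfl⟩ := hc
  rfl

noncomputable def scale (c : Cone A) (u : ℝ) : Cone A :=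
  Quotient.map (fun p : A × unitInterval => (p.1, projIcc 0 1 zero_le_one (u * p.2)))
    (by
      rintro p q (rfl | ⟨hp, hq⟩)
      · exact Or.inl rfl
      · exact Or.inr ⟨by simp [hp], by simp [hq]⟩) c

lemma scale_mk (a : A) (t : unitInterval) (u : ℝ) :
    scale (Quotient.mk (coneSetoid A) (a, t)) u
      = Quotient.mk (coneSetoid A) (a, projIcc 0 1 zero_le_one (u * t)) := rfl

lemma continuous_scale : Continuous fun q : Cone A × ℝ => scale q.1 q.2 :=
  isQuotientMap_quotient_mk'.continuous_lift_prod_left <|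
    continuous_quotient_mk'.comp (by fun_prop)

lemma scale_one (c : Cone A) : scale c 1 = c := by
  induction c using Quotient.ind with
  | _ p => rw [scale_mk, one_mul, projIcc_val]

lemma scale_eq_conePoint_iff [Nonempty A] {c : Cone A} {u : ℝ} (hu : 0 < u) :
    scale c u = conePoint A ↔ c = conePoint A := by
  rw [← height_eq_zero_iff, ← height_eq_zero_iff]
  induction c using Quotient.ind with
  | _ p =>
    rw [scale_mk, height_mk, height_mk, coe_projIcc, max_eq_left_iff, min_le_iff,
      ← p.2.2.1.ge_iff_eq']
    simp [mul_nonpos_iff, hu.le, hu.not_ge]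

lemma scale_inv_height_mem_coneBase {c : Cone A} (hc : height c ≠ 0) :
    scale c (height c)⁻¹ ∈ coneBase A := by
  induction c using Quotient.ind with
  | _ p =>
    rw [height_mk] at hc
    refine ⟨p.1, ?_⟩
    rw [height_mk, scale_mk, inv_mul_cancel₀ hc, projIcc_right]
    rfl

end Cone

section ExitGauge

lemma closedBall_neg_mem_nhds_zero {E : Type*} [SeminormedAddCommGroup E] {x : E}
    (hx : x ∈ ball (0 : E) 1) : closedBall (-x) 1 ∈ 𝓝 0 :=
  closedBall_mem_nhds_of_mem (by simpa using hx)

variable {E : Type*} [NormedAddCommGroup E] [NormedSpace ℝ E] {x y : E}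

/-- `exitGauge x y = μ⁻¹`, where `x + μ • (y - x)` is the point where the ray from `x`
through `y` leaves the closed unit ball. -/
noncomputable def exitGauge (x y : E) : ℝ := gauge (closedBall (-x) 1) (y - x)

lemma continuous_exitGauge (hx : x ∈ ball (0 : E) 1) : Continuous (exitGauge x) :=
  (continuous_gauge (convex_closedBall _ _) (closedBall_neg_mem_nhds_zero hx)).comp
    (continuous_sub_right x)

lemma norm_add_smul_sub_le_one_iff (hx : x ∈ ball (0 : E) 1) {k : ℝ} (hk : 0 ≤ k) :
    ‖x + k • (y - x)‖ ≤ 1 ↔ k * exitGauge x y ≤ 1 := by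
  rw [exitGauge, ← smul_eq_mul, ← gauge_smul_of_nonneg hk,
    gauge_le_one_iff_mem_closure (convex_closedBall _ _) (closedBall_neg_mem_nhds_zero hx),
    isClosed_closedBall.closure_eq, mem_closedBall_iff_norm, sub_neg_eq_add, add_comm]

lemma norm_add_smul_sub_eq_one_iff (hx : x ∈ ball (0 : E) 1) {k : ℝ} (hk : 0 ≤ k) :
    ‖x + k • (y - x)‖ = 1 ↔ k * exitGauge x y = 1 := by
  rw [exitGauge, ← smul_eq_mul, ← gauge_smul_of_nonneg hk,
    gauge_eq_one_iff_mem_frontier (convex_closedBall _ _) (closedBall_neg_mem_nhds_zero hx),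
    frontier_closedBall _ one_ne_zero, mem_sphere_iff_norm, sub_neg_eq_add, add_comm]

lemma exitGauge_le_one (hx : x ∈ ball (0 : E) 1) (hy : ‖y‖ ≤ 1) : exitGauge x y ≤ 1 := by
  simpa using (norm_add_smul_sub_le_one_iff (y := y) hx zero_le_one).mp (by simpa using hy)

lemma exitGauge_eq_one (hx : x ∈ ball (0 : E) 1) (hy : ‖y‖ = 1) : exitGauge x y = 1 := by
  simpa using (norm_add_smul_sub_eq_one_iff (y := y) hx zero_le_one).mp (by simpa using hy)

lemma exitGauge_pos (hx : x ∈ ball (0 : E) 1) (hy : y ≠ x) : 0 < exitGauge x y :=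
  (gauge_pos (absorbent_nhds_zero (closedBall_neg_mem_nhds_zero hx))
    (NormedSpace.isVonNBounded_of_isBounded ℝ isBounded_closedBall)).mpr (sub_ne_zero.mpr hy)

end ExitGauge

section RadialDeformation

variable {A : Type} [TopologicalSpace A] {E : Type*} [NormedAddCommGroup E] [NormedSpace ℝ E]
  {x : E}

noncomputable def radialGauge (x : E) (w : Cone A × closedBall (0 : E) 1) : ℝ :=
  max (Cone.height w.1) (exitGauge x w.2)

lemma continuous_radialGauge (hx : x ∈ ball (0 : E) 1) :
    Continuous (radialGauge (A := A) x) :=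
  (Cone.continuous_height.comp continuous_fst).max
    ((continuous_exitGauge hx).comp (continuous_subtype_val.comp continuous_snd))

lemma radialGauge_nonneg (w : Cone A × closedBall (0 : E) 1) : 0 ≤ radialGauge x w :=
  (Cone.height_nonneg _).trans (le_max_left _ _)

lemma radialGauge_le_one (hx : x ∈ ball (0 : E) 1) (w : Cone A × closedBall (0 : E) 1) :
    radialGauge x w ≤ 1 :=
  max_le (Cone.height_le_one _) (exitGauge_le_one hx (mem_closedBall_zero_iff.mp w.2.2))

lemma radialGauge_pos [Nonempty A] (hx : x ∈ ball (0 : E) 1) {w : Cone A × closedBall (0 : E) 1}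
    (hw : w ≠ (conePoint A, ⟨x, ball_subset_closedBall hx⟩)) : 0 < radialGauge x w := by
  by_contra! h
  have hheight : Cone.height w.1 = 0 :=
    le_antisymm ((le_max_left _ _).trans h) (Cone.height_nonneg _)
  have hy : (w.2 : E) = x := by
    by_contra hne
    exact (exitGauge_pos hx hne).not_ge ((le_max_right _ _).trans h)
  exact hw (Prod.ext (Cone.height_eq_zero_iff.mp hheight) (Subtype.ext hy))

lemma radialGauge_eq_one (hx : x ∈ ball (0 : E) 1) {w : Cone A × closedBall (0 : E) 1}
    (hw : (w.2 : E) ∈ sphere 0 1 ∨ w.1 ∈ coneBase A) : radialGauge x w = 1 := by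
  rcases hw with hw | hw
  · rw [radialGauge, exitGauge_eq_one hx (mem_sphere_zero_iff_norm.mp hw)]
    exact max_eq_right (Cone.height_le_one _)
  · rw [radialGauge, Cone.height_eq_one_of_mem_coneBase hw]
    exact max_eq_left (exitGauge_le_one hx (mem_closedBall_zero_iff.mp w.2.2))

-- At `(conePoint A, x)` this uses `0⁻¹ = 0`; only its values off that point matter.
noncomputable def radialFactor (x : E) (w : Cone A × closedBall (0 : E) 1) (s : unitInterval) :
    ℝ :=
  1 - s + s * (radialGauge x w)⁻¹

lemma radialFactor_nonneg (w : Cone A × closedBall (0 : E) 1) (s : unitInterval) :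
    0 ≤ radialFactor x w s :=
  add_nonneg (sub_nonneg.mpr s.2.2) (mul_nonneg s.2.1 (inv_nonneg.mpr (radialGauge_nonneg w)))

lemma one_le_radialFactor (hx : x ∈ ball (0 : E) 1) {w : Cone A × closedBall (0 : E) 1}
    (hw : 0 < radialGauge x w) (s : unitInterval) : 1 ≤ radialFactor x w s := by
  have : 1 ≤ (radialGauge x w)⁻¹ := one_le_inv₀ hw |>.mpr (radialGauge_le_one hx w)
  have := s.2.1
  unfold radialFactor
  nlinarith

lemma radialFactor_mul_exitGauge_le_one (hx : x ∈ ball (0 : E) 1)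
    (w : Cone A × closedBall (0 : E) 1) (s : unitInterval) :
    radialFactor x w s * exitGauge x w.2 ≤ 1 := by
  have hgν : exitGauge x w.2 ≤ radialGauge x w := le_max_right _ _
  rcases (radialGauge_nonneg (x := x) w).eq_or_lt with hν | hν
  · have : exitGauge x w.2 = 0 := le_antisymm (hν ▸ hgν) (gauge_nonneg _)
    simp [this]
  calc radialFactor x w s * exitGauge x w.2 ≤ radialFactor x w s * radialGauge x w :=
        mul_le_mul_of_nonneg_left hgν (radialFactor_nonneg w s)
    _ = (1 - s) * radialGauge x w + s := by
        rw [radialFactor, add_mul, mul_assoc, inv_mul_cancel₀ hν.ne', mul_one]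
    _ ≤ 1 := by nlinarith [radialGauge_le_one hx w, s.2.1, s.2.2]

lemma radialFactor_zero (w : Cone A × closedBall (0 : E) 1) : radialFactor x w 0 = 1 := by
  simp [radialFactor]

lemma radialFactor_one (w : Cone A × closedBall (0 : E) 1) :
    radialFactor x w 1 = (radialGauge x w)⁻¹ := by
  simp [radialFactor]

noncomputable def radialHomotopy (hx : x ∈ ball (0 : E) 1)
    (p : (Cone A × closedBall (0 : E) 1) × unitInterval) : Cone A × closedBall (0 : E) 1 :=
  (Cone.scale p.1.1 (radialFactor x p.1 p.2),
    ⟨x + radialFactor x p.1 p.2 • ((p.1.2 : E) - x), mem_closedBall_zero_iff.mpr <|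
      (norm_add_smul_sub_le_one_iff hx (radialFactor_nonneg _ _)).mpr
        (radialFactor_mul_exitGauge_le_one hx _ _)⟩)

lemma radialHomotopy_of_radialFactor_eq_one (hx : x ∈ ball (0 : E) 1)
    {w : Cone A × closedBall (0 : E) 1} {s : unitInterval} (h : radialFactor x w s = 1) :
    radialHomotopy hx (w, s) = w := by
  ext
  · simp only [radialHomotopy, h, Cone.scale_one]
  · simp [radialHomotopy, h]

lemma radialHomotopy_zero (hx : x ∈ ball (0 : E) 1) (w : Cone A × closedBall (0 : E) 1) :
    radialHomotopy hx (w, 0) = w :=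
  radialHomotopy_of_radialFactor_eq_one hx (radialFactor_zero w)

lemma radialHomotopy_one_of_mem (hx : x ∈ ball (0 : E) 1) {w : Cone A × closedBall (0 : E) 1}
    (hw : (w.2 : E) ∈ sphere 0 1 ∨ w.1 ∈ coneBase A) : radialHomotopy hx (w, 1) = w :=
  radialHomotopy_of_radialFactor_eq_one hx <| by
    rw [radialFactor_one, radialGauge_eq_one hx hw, inv_one]

lemma radialHomotopy_ne [Nonempty A] (hx : x ∈ ball (0 : E) 1)
    {w : Cone A × closedBall (0 : E) 1} (hw : w ≠ (conePoint A, ⟨x, ball_subset_closedBall hx⟩))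
    (s : unitInterval) :
    radialHomotopy hx (w, s) ≠ (conePoint A, ⟨x, ball_subset_closedBall hx⟩) := by
  have hk : 0 < radialFactor x w s :=
    zero_lt_one.trans_le (one_le_radialFactor hx (radialGauge_pos hx hw) s)
  contrapose! hw
  obtain ⟨hcone, hball⟩ := Prod.ext_iff.mp hw
  refine Prod.ext ((Cone.scale_eq_conePoint_iff hk).mp hcone) (Subtype.ext ?_)
  have : radialFactor x w s • ((w.2 : E) - x) = 0 := by
    simpa [radialHomotopy] using congrArg Subtype.val hball
  exact sub_eq_zero.mp ((smul_eq_zero.mp this).resolve_left hk.ne')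

lemma radialHomotopy_one_mem [Nonempty A] (hx : x ∈ ball (0 : E) 1)
    {w : Cone A × closedBall (0 : E) 1} (hw : w ≠ (conePoint A, ⟨x, ball_subset_closedBall hx⟩)) :
    ((radialHomotopy hx (w, 1)).2 : E) ∈ sphere 0 1 ∨
      (radialHomotopy hx (w, 1)).1 ∈ coneBase A := by
  have hν := radialGauge_pos hx hw
  rcases le_total (exitGauge x w.2) (Cone.height w.1) with h | h
  · right
    have hheight : radialGauge x w = Cone.height w.1 := max_eq_left h
    simp only [radialHomotopy, radialFactor_one, hheight]
    exact Cone.scale_inv_height_mem_coneBase (hheight ▸ hν).ne'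
  · left
    have hexit : radialGauge x w = exitGauge x w.2 := max_eq_right h
    rw [mem_sphere_zero_iff_norm]
    simp only [radialHomotopy, radialFactor_one, hexit]
    exact (norm_add_smul_sub_eq_one_iff hx (inv_nonneg.mpr (hexit ▸ hν).le)).mpr
      (inv_mul_cancel₀ (hexit ▸ hν).ne')

lemma continuous_radialHomotopy [Nonempty A] (hx : x ∈ ball (0 : E) 1) :
    Continuous fun q : {w : Cone A × closedBall (0 : E) 1 //
        w ≠ (conePoint A, ⟨x, ball_subset_closedBall hx⟩)} × unitInterval =>
      radialHomotopy hx (q.1.1, q.2) := by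
  have hk : Continuous fun q : {w : Cone A × closedBall (0 : E) 1 //
      w ≠ (conePoint A, ⟨x, ball_subset_closedBall hx⟩)} × unitInterval =>
      radialFactor x q.1.1 q.2 := by
    have := continuous_radialGauge (A := A) hx
    unfold radialFactor
    fun_prop (disch := exact fun q => (radialGauge_pos hx q.1.2).ne')
  refine (Cone.continuous_scale.comp ((continuous_fst.comp (continuous_subtype_val.comp
    continuous_fst)).prodMk hk)).prodMk (Continuous.subtype_mk ?_ _)
  fun_prop

end RadialDeformation

theorem isDeformationRetract_punctured_cone_prod_closedBall {A : Type} [TopologicalSpace A]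
    [Nonempty A] {E : Type} [NormedAddCommGroup E] [NormedSpace ℝ E] {x : E}
    (hx : x ∈ ball (0 : E) 1) :
    IsDeformationRetract
      {w : Cone A × closedBall (0 : E) 1 // w ≠ (conePoint A, ⟨x, ball_subset_closedBall hx⟩)}
      {w | (w.1.2 : E) ∈ sphere 0 1 ∨ w.1.1 ∈ coneBase A} :=
  ⟨⟨fun q => ⟨radialHomotopy hx (q.1.1, q.2), radialHomotopy_ne hx q.1.2 q.2⟩,
      (continuous_radialHomotopy hx).subtype_mk _⟩,
    fun w => Subtype.ext (radialHomotopy_zero hx w.1),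
    fun w => radialHomotopy_one_mem hx w.2,
    fun _ hw => Subtype.ext (radialHomotopy_one_of_mem hx hw)⟩

theorem IsDeformationRetract.nonempty_homotopyEquiv {Y : Type} [TopologicalSpace Y] {Z : Set Y}
    (h : IsDeformationRetract Y Z) : Nonempty (ContinuousMap.HomotopyEquiv Y Z) := by
  obtain ⟨H, h0, h1, hfix⟩ := h
  let r : C(Y, Z) := ⟨fun y => ⟨H (y, 1), h1 y⟩, by fun_prop⟩
  refine ⟨⟨r, ⟨Subtype.val, continuous_subtype_val⟩, ?_, ?_⟩⟩
  · exact ⟨(ContinuousMap.Homotopy.mk ⟨fun p => H (p.2, p.1), by fun_prop⟩ h0 fun _ => rfl).symm⟩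
  · rw [show r.comp ⟨Subtype.val, continuous_subtype_val⟩ = ContinuousMap.id Z from
      ContinuousMap.ext fun z => Subtype.ext (hfix z z.2)]

theorem punctured_cone_times_ball_deformation_retracts_general
    (A : Type) [TopologicalSpace A] [Nonempty A] (m : ℕ)
    (x : EuclideanSpace ℝ (Fin (m - 1))) (hx : x ∈ interior (unitBall (m - 1))) :
    IsDeformationRetract
      (↥{w : Cone A × ↥(unitBall (m - 1)) |
          w ≠ (conePoint A, ⟨x, interior_subset hx⟩)})
      {w : ↥{w : Cone A × ↥(unitBall (m - 1)) |
          w ≠ (conePoint A, ⟨x, interior_subset hx⟩)} |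
        (w : Cone A × ↥(unitBall (m - 1))) ∈ coneSphereUnion A (m - 1)} ∧
    Nonempty
      (ContinuousMap.HomotopyEquiv
        (↥{w : Cone A × ↥(unitBall (m - 1)) |
            w ≠ (conePoint A, ⟨x, interior_subset hx⟩)})
        (↥{w : ↥{w : Cone A × ↥(unitBall (m - 1)) |
            w ≠ (conePoint A, ⟨x, interior_subset hx⟩)} |
          (w : Cone A × ↥(unitBall (m - 1))) ∈ coneSphereUnion A (m - 1)})) := by
  have h : IsDeformationRetract _ _ := isDeformationRetract_punctured_cone_prod_closedBall (A := A)
    (interior_closedBall (0 : EuclideanSpace ℝ (Fin (m - 1))) one_ne_zero ▸ hx)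
  exact ⟨h, h.nonempty_homotopyEquiv⟩

/-- For `A` nonempty, `m ≥ 2`, `D ⊆ ℝ^{m-1}` the closed unit ball with
boundary sphere `S`, and `x` an interior point of `D`, the space `(CA × D) \ {(p, x)}`
deformation retracts onto `(CA × S) ∪ (A × D)`; in particular the two spaces are
homotopy equivalent. -/
theorem punctured_cone_times_ball_deformation_retracts
    (A : Type) [TopologicalSpace A] [Nonempty A] (m : ℕ) (hm : 2 ≤ m)
    (x : EuclideanSpace ℝ (Fin (m - 1))) (hx : x ∈ interior (unitBall (m - 1))) :
    IsDeformationRetract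
      (↥{w : Cone A × ↥(unitBall (m - 1)) |
          w ≠ (conePoint A, ⟨x, interior_subset hx⟩)})
      {w : ↥{w : Cone A × ↥(unitBall (m - 1)) |
          w ≠ (conePoint A, ⟨x, interior_subset hx⟩)} |
        (w : Cone A × ↥(unitBall (m - 1))) ∈ coneSphereUnion A (m - 1)} ∧
    Nonempty
      (ContinuousMap.HomotopyEquiv
        (↥{w : Cone A × ↥(unitBall (m - 1)) |
            w ≠ (conePoint A, ⟨x, interior_subset hx⟩)})
        (↥{w : ↥{w : Cone A × ↥(unitBall (m - 1)) |
            w ≠ (conePoint A, ⟨x, interior_subset hx⟩)} |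
          (w : Cone A × ↥(unitBall (m - 1))) ∈ coneSphereUnion A (m - 1)})) :=
  punctured_cone_times_ball_deformation_retracts_general A m x hx
end

section
/- Let Γ be a group and let m, n ≥ 1 be integers. Let φ₋ : ℤ^m → Γ × ℤ^m be the homomorphism a ↦ (1, a), and let φ₊ : ℤ^m → ℤ^m × ℤ^n be the homomorphism a ↦ (a, 1). Then the amalgamated free product (Γ × ℤ^m) ∗_{ℤ^m} (ℤ^m × ℤ^n) — that is, the pushout in the category of groups of φ₋ and φ₊ — is isomorphic to ℤ^m × (Γ ∗ ℤ^n), where Γ ∗ ℤ^n denotes the free product of Γ and ℤ^n. -/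
/-- The free abelian group `ℤ^m` of rank `m`, written multiplicatively. -/
abbrev FreeAb (m : ℕ) : Type := Multiplicative (Fin m → ℤ)

/-- The two vertex groups of the amalgam: `Γ × ℤ^m` and `ℤ^m × ℤ^n`. -/
def amalgamFactor (Γ : Type) [Group Γ] (m n : ℕ) : Bool → Type
  | true => Γ × FreeAb m
  | false => FreeAb m × FreeAb n

instance (Γ : Type) [Group Γ] (m n : ℕ) : ∀ b, Group (amalgamFactor Γ m n b) := by
  rintro (_ | _) <;> dsimp [amalgamFactor] <;> infer_instance

/-- The amalgamating maps `φ₋ : ℤ^m → Γ × ℤ^m`, `a ↦ (1, a)`, and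
`φ₊ : ℤ^m → ℤ^m × ℤ^n`, `a ↦ (a, 1)`. -/
def amalgamMap (Γ : Type) [Group Γ] (m n : ℕ) :
    ∀ b, FreeAb m →* amalgamFactor Γ m n b
  | true => MonoidHom.inr Γ (FreeAb m)
  | false => MonoidHom.inl (FreeAb m) (FreeAb n)


/-!
The copy of `ℤ^m` is central in both factors, hence in the amalgam. So `a ↦ a` on `ℤ^m` and the
free product of the copies of `Γ` and `ℤ^n` combine into a homomorphism
`ℤ^m × (Γ ∗ ℤ^n) → (Γ × ℤ^m) ∗_{ℤ^m} (ℤ^m × ℤ^n)`, inverse to the map induced by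
`(g, a) ↦ (a, g)` and `(a, b) ↦ (a, b)`.
-/

namespace Monoid.PushoutI

variable {ι : Type*} {G : ι → Type*} {H : Type*} [∀ i, Monoid (G i)] [Monoid H]
  {φ : ∀ i, H →* G i}

theorem commute_base_of_forall_commute [Nonempty ι] {a : H}
    (ha : ∀ i (g : G i), Commute (φ i a) g) (x : PushoutI φ) : Commute (base φ a) x := by
  induction x using PushoutI.induction_on with
  | of i g => rw [← of_apply_eq_base φ i]; exact (ha i g).map (of i)
  | base h =>
    obtain ⟨i⟩ := ‹Nonempty ι›
    rw [← of_apply_eq_base φ i, ← of_apply_eq_base φ i]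
    exact (ha i (φ i h)).map (of i)
  | mul x y hx hy => exact hx.mul_right hy

end Monoid.PushoutI

open Monoid

section

variable (Γ : Type) [Group Γ] (m n : ℕ)

local notation "P" => PushoutI (amalgamMap Γ m n)

theorem amalgam_of_true_eq_base_mul (g : Γ) (a : FreeAb m) :
    PushoutI.of (φ := amalgamMap Γ m n) true (g, a)
      = PushoutI.base _ a * PushoutI.of (φ := amalgamMap Γ m n) true (g, 1) := by
  rw [← PushoutI.of_apply_eq_base _ true a]
  exact (congrArg _ (Prod.ext (one_mul g).symm (mul_one a).symm)).trans (map_mul _ _ _)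

theorem amalgam_of_false_eq_base_mul (a : FreeAb m) (b : FreeAb n) :
    PushoutI.of (φ := amalgamMap Γ m n) false (a, b)
      = PushoutI.base _ a * PushoutI.of (φ := amalgamMap Γ m n) false (1, b) := by
  rw [← PushoutI.of_apply_eq_base _ false a]
  exact (congrArg _ (Prod.ext (mul_one a).symm (one_mul b).symm)).trans (map_mul _ _ _)

theorem amalgamMap_commute (a : FreeAb m) :
    ∀ b (x : amalgamFactor Γ m n b), Commute (amalgamMap Γ m n b a) x
  | true, (g, a') => Prod.ext (Commute.one_left g) (mul_comm a a')
  | false, (a', b) => Prod.ext (mul_comm a a') (Commute.one_left b)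

def amalgamFactorToProdCoprod : ∀ b, amalgamFactor Γ m n b →* FreeAb m × Coprod Γ (FreeAb n)
  | true => (MonoidHom.snd _ _).prod (Coprod.inl.comp (MonoidHom.fst _ _))
  | false => (MonoidHom.fst _ _).prod (Coprod.inr.comp (MonoidHom.snd _ _))

theorem amalgamFactorToProdCoprod_comp_amalgamMap :
    ∀ b, (amalgamFactorToProdCoprod Γ m n b).comp (amalgamMap Γ m n b) = MonoidHom.inl _ _
  | true => MonoidHom.ext fun _ => Prod.ext rfl (map_one (Coprod.inl : Γ →* Coprod Γ (FreeAb n)))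
  | false =>
    MonoidHom.ext fun _ => Prod.ext rfl (map_one (Coprod.inr : FreeAb n →* Coprod Γ (FreeAb n)))

def amalgamToProdCoprod : P →* FreeAb m × Coprod Γ (FreeAb n) :=
  PushoutI.lift (amalgamFactorToProdCoprod Γ m n) (MonoidHom.inl _ _)
    (amalgamFactorToProdCoprod_comp_amalgamMap Γ m n)

@[simp]
theorem amalgamToProdCoprod_of_true (g : Γ) (a : FreeAb m) :
    amalgamToProdCoprod Γ m n (PushoutI.of true (g, a)) = (a, Coprod.inl g) :=
  PushoutI.lift_of _ _ _ _

@[simp]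
theorem amalgamToProdCoprod_of_false (a : FreeAb m) (b : FreeAb n) :
    amalgamToProdCoprod Γ m n (PushoutI.of false (a, b)) = (a, Coprod.inr b) :=
  PushoutI.lift_of _ _ _ _

@[simp]
theorem amalgamToProdCoprod_base (a : FreeAb m) :
    amalgamToProdCoprod Γ m n (PushoutI.base _ a) = (a, 1) :=
  PushoutI.lift_base _ _ _ _

def coprodToAmalgam : Coprod Γ (FreeAb n) →* P :=
  Coprod.lift ((PushoutI.of true).comp (MonoidHom.inl Γ (FreeAb m)))
    ((PushoutI.of false).comp (MonoidHom.inr (FreeAb m) (FreeAb n)))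

@[simp]
theorem coprodToAmalgam_inl (g : Γ) :
    coprodToAmalgam Γ m n (Coprod.inl g) = PushoutI.of true (g, 1) :=
  Coprod.lift_apply_inl _ _ _

@[simp]
theorem coprodToAmalgam_inr (b : FreeAb n) :
    coprodToAmalgam Γ m n (Coprod.inr b) = PushoutI.of false (1, b) :=
  Coprod.lift_apply_inr _ _ _

def prodCoprodToAmalgam : FreeAb m × Coprod Γ (FreeAb n) →* P :=
  (PushoutI.base _).noncommCoprod (coprodToAmalgam Γ m n)
    fun a _ => PushoutI.commute_base_of_forall_commute (amalgamMap_commute Γ m n a) _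

theorem prodCoprodToAmalgam_apply (a : FreeAb m) (x : Coprod Γ (FreeAb n)) :
    prodCoprodToAmalgam Γ m n (a, x) = PushoutI.base _ a * coprodToAmalgam Γ m n x :=
  rfl

theorem amalgamToProdCoprod_coprodToAmalgam (x : Coprod Γ (FreeAb n)) :
    amalgamToProdCoprod Γ m n (coprodToAmalgam Γ m n x) = (1, x) := by
  induction x using Coprod.induction_on with
  | inl g => simp
  | inr b => simp
  | mul x y hx hy => simp [hx, hy]

theorem prodCoprodToAmalgam_comp_amalgamToProdCoprod :
    (prodCoprodToAmalgam Γ m n).comp (amalgamToProdCoprod Γ m n) = MonoidHom.id P := by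
  refine PushoutI.hom_ext_nonempty fun b => ?_
  cases b
  · ext ⟨a, b⟩
    show prodCoprodToAmalgam Γ m n (amalgamToProdCoprod Γ m n (PushoutI.of false (a, b))) =
      PushoutI.of false (a, b)
    rw [amalgamToProdCoprod_of_false, prodCoprodToAmalgam_apply, coprodToAmalgam_inr,
      amalgam_of_false_eq_base_mul Γ m n a b]
  · ext ⟨g, a⟩
    show prodCoprodToAmalgam Γ m n (amalgamToProdCoprod Γ m n (PushoutI.of true (g, a))) =
      PushoutI.of true (g, a)
    rw [amalgamToProdCoprod_of_true, prodCoprodToAmalgam_apply, coprodToAmalgam_inl,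
      amalgam_of_true_eq_base_mul Γ m n g a]

theorem amalgamToProdCoprod_comp_prodCoprodToAmalgam :
    (amalgamToProdCoprod Γ m n).comp (prodCoprodToAmalgam Γ m n) = MonoidHom.id _ := by
  ext ⟨a, x⟩ : 1
  simp [prodCoprodToAmalgam_apply, amalgamToProdCoprod_coprodToAmalgam]

def amalgamEquivProdCoprod : P ≃* FreeAb m × Coprod Γ (FreeAb n) :=
  (amalgamToProdCoprod Γ m n).toMulEquiv (prodCoprodToAmalgam Γ m n)
    (prodCoprodToAmalgam_comp_amalgamToProdCoprod Γ m n)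
    (amalgamToProdCoprod_comp_prodCoprodToAmalgam Γ m n)

end

theorem amalgam_iso_prod_coprod_general (Γ : Type) [Group Γ] (m n : ℕ) :
    Nonempty (Monoid.PushoutI (amalgamMap Γ m n) ≃*
      FreeAb m × Monoid.Coprod Γ (FreeAb n)) :=
  ⟨amalgamEquivProdCoprod Γ m n⟩

/-- The amalgamated free product
`(Γ × ℤ^m) ∗_{ℤ^m} (ℤ^m × ℤ^n)` (the pushout, in the category of groups, of
`a ↦ (1, a)` and `a ↦ (a, 1)`) is isomorphic to `ℤ^m × (Γ ∗ ℤ^n)`. -/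
theorem amalgam_iso_prod_coprod (Γ : Type) [Group Γ] (m n : ℕ) (hm : 1 ≤ m) (hn : 1 ≤ n) :
    Nonempty (Monoid.PushoutI (amalgamMap Γ m n) ≃*
      FreeAb m × Monoid.Coprod Γ (FreeAb n)) :=
  amalgam_iso_prod_coprod_general Γ m n
end
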